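/- arXiv:1703.01955 — 6 statements merged into one kernel-verified Lean document; each statement's English description precedes it below -/
import Mathlib

section
/- Let m be any integer and let c_n denote the coefficient of x^n in T(x)^m (the m-th power of the unit T in ℤ[[x]], using the inverse when m < 0). Then c_0 = 1 and, for every n ≥ 1, n·c_n = m·Σ_{k=0}^{n-1} (1 - 2^{ν₂(n-k)+1})·c_k. -/
/-- The generating function `T(x) = ∑ (-1)^{s₂(n)} xⁿ = ∏ (1 - x^{2^j})`
of the Prouhet–Thue–Morse sequence. -/
noncomputable def T : PowerSeries ℤ :=
  PowerSeries.mk fun n => (-1) ^ (Nat.digits 2 n).sum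
lemma T_constantCoeff : PowerSeries.constantCoeff T = 1 := by
  rw [← PowerSeries.coeff_zero_eq_constantCoeff]
  simp [T]

/-- `T` as a unit of `ℤ⟦x⟧` (its constant coefficient is `1`). -/
noncomputable def TU : (PowerSeries ℤ)ˣ where
  val := T
  inv := PowerSeries.invOfUnit T 1
  val_inv := PowerSeries.mul_invOfUnit T 1 (by simpa using T_constantCoeff)
  inv_val := by
    rw [mul_comm]; exact PowerSeries.mul_invOfUnit T 1 (by simpa using T_constantCoeff)

/-- `c m n` is the coefficient of `xⁿ` in `T(x)^m`, for `m : ℤ`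
(using the inverse of the unit `T` when `m < 0`). -/
noncomputable def c (m : ℤ) (n : ℕ) : ℤ :=
  PowerSeries.coeff n ((TU ^ m : (PowerSeries ℤ)ˣ) : PowerSeries ℤ)


/-!
Write `t n = (-1) ^ s₂(n)` and `b d = 1 - 2 ^ (ν₂(d) + 1)`. Since `t (2n) = t n`,
`t (2n + 1) = -t n`, `b (2e) = 2 b e - 1` and `b d = -1` for odd `d`, pairing the terms
`2j`, `2j + 1` of `∑_{k<n} b(n-k) t(k)` reduces it to the same sum at `⌊n / 2⌋`, and induction
gives `∑_{k<n} b(n-k) t(k) = n t(n)`. In other words `T' = B T` with `B = ∑ b(d+1) xᵈ`: `B` is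
the logarithmic derivative of `T`, so `m B` is that of `T ^ m`, and `(T ^ m)' = m B T ^ m` read
coefficientwise is the recursion.
-/

open PowerSeries Finset

section Derivation

variable {R A : Type*} [CommSemiring R] [CommRing A] [Algebra R A]

theorem Derivation.apply_units_inv_of_apply_eq_mul (D : Derivation R A A) {u : Aˣ} {b : A}
    (hu : D u = b * u) : D ↑u⁻¹ = -b * ↑u⁻¹ := by
  have h : D (↑u⁻¹ * ↑u) = 0 := by rw [Units.inv_mul, D.map_one_eq_zero]
  rw [D.leibniz, smul_eq_mul, smul_eq_mul, hu] at h
  linear_combination (↑u⁻¹ : A) * h - (D ↑u⁻¹ + b * ↑u⁻¹) * u.inv_mul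

theorem Derivation.apply_units_zpow_of_apply_eq_mul (D : Derivation R A A) {u : Aˣ} {b : A}
    (hu : D u = b * u) (m : ℤ) : D ↑(u ^ m) = m * (b * ↑(u ^ m)) := by
  induction m using Int.induction_on with
  | zero => simp
  | succ m ih =>
    rw [zpow_add_one, Units.val_mul, D.leibniz, smul_eq_mul, smul_eq_mul, ih, hu]
    push_cast
    ring
  | pred m ih =>
    rw [zpow_sub_one, Units.val_mul, D.leibniz, smul_eq_mul, smul_eq_mul, ih,
      D.apply_units_inv_of_apply_eq_mul hu]
    push_cast
    ring

end Derivation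

theorem Finset.sum_range_two_mul {M : Type*} [AddCommMonoid M] (f : ℕ → M) (n : ℕ) :
    ∑ k ∈ range (2 * n), f k = ∑ j ∈ range n, (f (2 * j) + f (2 * j + 1)) := by
  induction n with
  | zero => simp
  | succ n ih =>
    rw [Nat.mul_succ, sum_range_succ, sum_range_succ, sum_range_succ, ih, add_assoc]

def thueMorse (n : ℕ) : ℤ := (-1) ^ (Nat.digits 2 n).sum

theorem thueMorse_two_mul (n : ℕ) : thueMorse (2 * n) = thueMorse n := by
  rcases eq_or_ne n 0 with rfl | hn
  · rfl
  · rw [thueMorse, ← zero_add (2 * n), Nat.digits_add 2 one_lt_two 0 n two_pos (Or.inr hn)]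
    simp [thueMorse]

theorem thueMorse_two_mul_add_one (n : ℕ) : thueMorse (2 * n + 1) = -thueMorse n := by
  rw [thueMorse, add_comm, Nat.digits_add 2 one_lt_two 1 n one_lt_two (Or.inl one_ne_zero),
    List.sum_cons, pow_add, thueMorse]
  ring

def logDerivCoeff (d : ℕ) : ℤ := 1 - 2 ^ (padicValNat 2 d + 1)

theorem logDerivCoeff_of_odd {d : ℕ} (hd : Odd d) : logDerivCoeff d = -1 := by
  rw [logDerivCoeff, padicValNat.eq_zero_of_not_dvd hd.not_two_dvd_nat]
  norm_num

theorem logDerivCoeff_two_mul {e : ℕ} (he : e ≠ 0) :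
    logDerivCoeff (2 * e) = 2 * logDerivCoeff e - 1 := by
  rw [logDerivCoeff, logDerivCoeff, padicValNat.mul two_ne_zero he, padicValNat_self]
  ring

theorem sum_logDerivCoeff_mul_thueMorse_two_mul (n : ℕ) :
    ∑ k ∈ range (2 * n), logDerivCoeff (2 * n - k) * thueMorse k
      = 2 * ∑ k ∈ range n, logDerivCoeff (n - k) * thueMorse k := by
  rw [sum_range_two_mul, mul_sum]
  refine sum_congr rfl fun j hj => ?_
  have hj : j < n := mem_range.mp hj
  rw [show 2 * n - 2 * j = 2 * (n - j) by omega,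
    show 2 * n - (2 * j + 1) = 2 * (n - j - 1) + 1 by omega,
    logDerivCoeff_two_mul (by omega), logDerivCoeff_of_odd (odd_two_mul_add_one _),
    thueMorse_two_mul, thueMorse_two_mul_add_one]
  ring

theorem sum_logDerivCoeff_mul_thueMorse_two_mul_add_one (n : ℕ) :
    ∑ k ∈ range (2 * n + 1), logDerivCoeff (2 * n + 1 - k) * thueMorse k
      = -2 * ∑ k ∈ range n, logDerivCoeff (n - k) * thueMorse k - thueMorse n := by
  rw [sum_range_succ, sum_range_two_mul, mul_sum, Nat.add_sub_cancel_left,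
    logDerivCoeff_of_odd odd_one, thueMorse_two_mul, neg_one_mul, sub_eq_add_neg]
  congr 1
  refine sum_congr rfl fun j hj => ?_
  have hj : j < n := mem_range.mp hj
  rw [show 2 * n + 1 - 2 * j = 2 * (n - j) + 1 by omega,
    show 2 * n + 1 - (2 * j + 1) = 2 * (n - j) by omega,
    logDerivCoeff_two_mul (by omega), logDerivCoeff_of_odd (odd_two_mul_add_one _),
    thueMorse_two_mul, thueMorse_two_mul_add_one]
  ring

theorem sum_logDerivCoeff_mul_thueMorse (n : ℕ) :
    ∑ k ∈ range n, logDerivCoeff (n - k) * thueMorse k = n * thueMorse n := by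
  induction n using Nat.strong_induction_on with
  | _ n ih =>
    obtain ⟨N, rfl | rfl⟩ := Nat.even_or_odd' n
    · rcases eq_or_ne N 0 with rfl | hN
      · simp
      rw [sum_logDerivCoeff_mul_thueMorse_two_mul, ih N (by omega), thueMorse_two_mul]
      push_cast
      ring
    · rw [sum_logDerivCoeff_mul_thueMorse_two_mul_add_one, ih N (by omega),
        thueMorse_two_mul_add_one]
      push_cast
      ring

noncomputable def logDerivT : ℤ⟦X⟧ := mk fun d => logDerivCoeff (d + 1)

theorem coeff_logDerivT_mul (f : ℤ⟦X⟧) (n : ℕ) :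
    coeff n (logDerivT * f) = ∑ k ∈ range (n + 1), logDerivCoeff (n + 1 - k) * coeff k f := by
  rw [mul_comm, coeff_mul,
    Nat.sum_antidiagonal_eq_sum_range_succ (fun i j => coeff i f * coeff j logDerivT)]
  refine sum_congr rfl fun k hk => ?_
  rw [logDerivT, coeff_mk, mul_comm, show n - k + 1 = n + 1 - k by have := mem_range.mp hk; omega]

theorem derivative_T : d⁄dX ℤ T = logDerivT * T := by
  ext n
  have coeff_T (k : ℕ) : coeff k T = thueMorse k := coeff_mk _ _
  simp only [coeff_derivative, coeff_logDerivT_mul, coeff_T, sum_logDerivCoeff_mul_thueMorse]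
  push_cast
  ring

theorem c_zero (m : ℤ) : c m 0 = 1 := by
  have hTU : Units.map (constantCoeff : ℤ⟦X⟧ →+* ℤ).toMonoidHom TU = 1 :=
    Units.ext T_constantCoeff
  rw [c, coeff_zero_eq_constantCoeff]
  change ((Units.map (constantCoeff : ℤ⟦X⟧ →+* ℤ).toMonoidHom (TU ^ m) : ℤˣ) : ℤ) = 1
  rw [map_zpow, hTU, one_zpow, Units.val_one]

theorem stmt0 (m : ℤ) :
    c m 0 = 1 ∧
      ∀ n : ℕ, 1 ≤ n →
        (n : ℤ) * c m n =
          m * ∑ k ∈ Finset.range n,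
            (1 - 2 ^ (padicValNat 2 (n - k) + 1)) * c m k := by
  refine ⟨c_zero m, fun n hn => ?_⟩
  obtain ⟨n, rfl⟩ := Nat.exists_eq_add_of_le' hn
  have h := congrArg (coeff n)
    ((d⁄dX ℤ).apply_units_zpow_of_apply_eq_mul (u := TU) derivative_T m)
  rw [coeff_derivative, ← map_intCast (C (R := ℤ)), coeff_C_mul, coeff_logDerivT_mul] at h
  simpa [c, logDerivCoeff, mul_comm] using h
end

section
/- Let m ∈ ℕ₊. Then t_m(0) = 1, t_m(1) = -m, and for every n ∈ ℕ one has t_m(2n) = Σ_{j=0}^{⌊m/2⌋} C(m,2j)·t_m(n-j) and t_m(2n+1) = -Σ_{j=0}^{⌊(m-1)/2⌋} C(m,2j+1)·t_m(n-j), where t_m(k) is set to 0 for k < 0. -/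
/-- `tE m x` is the coefficient of `x`-th power in `T(x)^m`, extended by `0`
for negative indices. -/
noncomputable def tE (m : ℕ) (x : ℤ) : ℤ :=
  if x < 0 then 0 else PowerSeries.coeff x.toNat (T ^ m)

/-!
Since `s₂(2n) = s₂(n)` and `s₂(2n + 1) = s₂(n) + 1`, the series satisfies `T(x) = (1 - x) T(x²)`,
hence `T(x)^m = (1 - x)^m T(x²)^m`. Writing every series as `f(x) = E f(x²) + x O f(x²)`, the
even and odd parts of a product `g(x) h(x²)` are `E g · h` and `O g · h`. For `g = (1 - x)^m` these
parts are `∑ C(m, 2j) yʲ` and `-∑ C(m, 2j + 1) yʲ`, and comparing coefficients gives the recursion.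
-/

open PowerSeries Finset

namespace PowerSeries

variable {R : Type*} [CommRing R]

noncomputable def evenPart (f : R⟦X⟧) : R⟦X⟧ := mk fun n => coeff (2 * n) f

noncomputable def oddPart (f : R⟦X⟧) : R⟦X⟧ := mk fun n => coeff (2 * n + 1) f

@[simp]
theorem coeff_evenPart (f : R⟦X⟧) (n : ℕ) : coeff n (evenPart f) = coeff (2 * n) f :=
  coeff_mk _ _

@[simp]
theorem coeff_oddPart (f : R⟦X⟧) (n : ℕ) : coeff n (oddPart f) = coeff (2 * n + 1) f :=
  coeff_mk _ _

theorem coeff_expand_two_mul_add_one (f : R⟦X⟧) (n : ℕ) :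
    coeff (2 * n + 1) (expand 2 two_ne_zero f) = 0 :=
  coeff_expand_of_not_dvd _ _ _ (by omega)

theorem coeff_two_mul_X_mul_expand_two (f : R⟦X⟧) (n : ℕ) :
    coeff (2 * n) (X * expand 2 two_ne_zero f) = 0 := by
  rcases n with _ | n
  · simp
  · rw [show 2 * (n + 1) = 2 * n + 1 + 1 by ring, coeff_succ_X_mul,
      coeff_expand_two_mul_add_one]

theorem expand_evenPart_add_X_mul_expand_oddPart (f : R⟦X⟧) :
    expand 2 two_ne_zero (evenPart f) + X * expand 2 two_ne_zero (oddPart f) = f := by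
  ext n
  obtain ⟨k, rfl | rfl⟩ := Nat.even_or_odd' n
  · simp [coeff_two_mul_X_mul_expand_two]
  · simp [coeff_succ_X_mul, coeff_expand_two_mul_add_one]

theorem evenPart_expand_add_X_mul_expand (f g : R⟦X⟧) :
    evenPart (expand 2 two_ne_zero f + X * expand 2 two_ne_zero g) = f := by
  ext n
  simp [coeff_two_mul_X_mul_expand_two]

theorem oddPart_expand_add_X_mul_expand (f g : R⟦X⟧) :
    oddPart (expand 2 two_ne_zero f + X * expand 2 two_ne_zero g) = g := by
  ext n
  simp [coeff_succ_X_mul, coeff_expand_two_mul_add_one]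

theorem mul_expand_two_eq (f g : R⟦X⟧) :
    f * expand 2 two_ne_zero g = expand 2 two_ne_zero (evenPart f * g) +
      X * expand 2 two_ne_zero (oddPart f * g) := by
  conv_lhs => rw [← expand_evenPart_add_X_mul_expand_oddPart f]
  simp only [map_mul]
  ring

theorem evenPart_mul_expand_two (f g : R⟦X⟧) :
    evenPart (f * expand 2 two_ne_zero g) = evenPart f * g := by
  rw [mul_expand_two_eq, evenPart_expand_add_X_mul_expand]

theorem oddPart_mul_expand_two (f g : R⟦X⟧) :
    oddPart (f * expand 2 two_ne_zero g) = oddPart f * g := by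
  rw [mul_expand_two_eq, oddPart_expand_add_X_mul_expand]

theorem coeff_one_sub_X_pow (m k : ℕ) :
    coeff k ((1 - X : R⟦X⟧) ^ m) = (-1) ^ k * m.choose k := by
  have h : (1 - X : R⟦X⟧) = rescale (-1 : R) (1 + X) := by simp [rescale_X]; ring
  have hcoe : (1 + X : R⟦X⟧) ^ m = ((1 + Polynomial.X) ^ m : Polynomial R) := by simp
  rw [h, ← map_pow, coeff_rescale, hcoe, Polynomial.coeff_coe, Polynomial.coeff_one_add_X_pow]

theorem evenPart_one_sub_X_pow (m : ℕ) :
    evenPart ((1 - X : R⟦X⟧) ^ m) = mk fun j => (m.choose (2 * j) : R) := by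
  ext j
  simp [coeff_one_sub_X_pow, pow_mul]

theorem oddPart_one_sub_X_pow (m : ℕ) :
    oddPart ((1 - X : R⟦X⟧) ^ m) = -mk fun j => (m.choose (2 * j + 1) : R) := by
  ext j
  simp [coeff_one_sub_X_pow, pow_succ, pow_mul]

end PowerSeries

theorem digits_two_sum_two_mul (n : ℕ) : (Nat.digits 2 (2 * n)).sum = (Nat.digits 2 n).sum := by
  rcases Nat.eq_zero_or_pos n with rfl | hn
  · simp
  · rw [← zero_add (2 * n), Nat.digits_add 2 one_lt_two 0 n two_pos (.inr hn.ne'), List.sum_cons,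
      zero_add]

theorem digits_two_sum_two_mul_add_one (n : ℕ) :
    (Nat.digits 2 (2 * n + 1)).sum = (Nat.digits 2 n).sum + 1 := by
  rw [add_comm, Nat.digits_add 2 one_lt_two 1 n one_lt_two (.inl one_ne_zero)]
  simp [add_comm]

theorem evenPart_T : evenPart T = T := by
  ext n
  simp [T, digits_two_sum_two_mul]

theorem oddPart_T : oddPart T = -T := by
  ext n
  rw [coeff_oddPart, map_neg, T, coeff_mk, coeff_mk, digits_two_sum_two_mul_add_one, pow_succ,
    mul_neg_one]

theorem T_eq_one_sub_X_mul_expand : T = (1 - X) * expand 2 two_ne_zero T := by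
  conv_lhs => rw [← expand_evenPart_add_X_mul_expand_oddPart T, evenPart_T, oddPart_T]
  rw [map_neg]
  ring

theorem T_pow_eq_one_sub_X_pow_mul_expand (m : ℕ) :
    T ^ m = (1 - X) ^ m * expand 2 two_ne_zero (T ^ m) := by
  conv_lhs => rw [T_eq_one_sub_X_mul_expand]
  rw [mul_pow, map_pow]

theorem tE_natCast (m n : ℕ) : tE m n = coeff n (T ^ m) := by
  simp [tE]

theorem tE_of_neg (m : ℕ) {x : ℤ} (hx : x < 0) : tE m x = 0 := by
  simp [tE, hx]

theorem sum_range_eq_sum_range_of_eq_zero {M : Type*} [AddCommMonoid M] {f : ℕ → M} {A B : ℕ}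
    (hA : ∀ j, A ≤ j → f j = 0) (hB : ∀ j, B ≤ j → f j = 0) :
    ∑ j ∈ range A, f j = ∑ j ∈ range B, f j := by
  have key : ∀ {A B}, A ≤ B → (∀ j, A ≤ j → f j = 0) → ∑ j ∈ range A, f j = ∑ j ∈ range B, f j :=
    fun hAB hA => sum_subset (range_subset_range.mpr hAB) fun j _ hj => hA j (by simpa using hj)
  rcases le_total A B with h | h
  · exact key h hA
  · exact (key h hB).symm

theorem coeff_mk_mul_T_pow (a : ℕ → ℤ) {N : ℕ} (ha : ∀ j, N ≤ j → a j = 0) (m n : ℕ) :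
    coeff n (mk a * T ^ m) = ∑ j ∈ range N, a j * tE m (n - j) := by
  rw [coeff_mul, Nat.sum_antidiagonal_eq_sum_range_succ_mk]
  calc ∑ j ∈ range (n + 1), coeff j (mk a) * coeff (n - j) (T ^ m)
      = ∑ j ∈ range (n + 1), a j * tE m (n - j) := by
        refine sum_congr rfl fun j hj => ?_
        rw [coeff_mk, ← tE_natCast, Nat.cast_sub (by simpa [Nat.lt_succ_iff] using hj)]
    _ = ∑ j ∈ range N, a j * tE m (n - j) :=
        sum_range_eq_sum_range_of_eq_zero
          (fun j hj => by rw [tE_of_neg m (by omega), mul_zero])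
          (fun j hj => by rw [ha j hj, zero_mul])

theorem tE_two_mul (m n : ℕ) :
    tE m (2 * n) = ∑ j ∈ range (m / 2 + 1), (m.choose (2 * j) : ℤ) * tE m (n - j) := by
  have hvanish : ∀ j, m / 2 + 1 ≤ j → (m.choose (2 * j) : ℤ) = 0 := fun j hj => by
    rw [Nat.choose_eq_zero_of_lt (by omega), Nat.cast_zero]
  rw [← coeff_mk_mul_T_pow _ hvanish, ← evenPart_one_sub_X_pow, ← evenPart_mul_expand_two,
    ← T_pow_eq_one_sub_X_pow_mul_expand,
    coeff_evenPart, ← tE_natCast]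
  norm_cast

theorem tE_two_mul_add_one (m n : ℕ) :
    tE m (2 * n + 1) =
      -∑ j ∈ range ((m - 1) / 2 + 1), (m.choose (2 * j + 1) : ℤ) * tE m (n - j) := by
  have hvanish : ∀ j, (m - 1) / 2 + 1 ≤ j → (m.choose (2 * j + 1) : ℤ) = 0 := fun j hj => by
    rw [Nat.choose_eq_zero_of_lt (by omega), Nat.cast_zero]
  rw [← coeff_mk_mul_T_pow _ hvanish, ← map_neg, ← neg_mul, ← oddPart_one_sub_X_pow,
    ← oddPart_mul_expand_two, ← T_pow_eq_one_sub_X_pow_mul_expand, coeff_oddPart, ← tE_natCast]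
  norm_cast

theorem tE_zero (m : ℕ) : tE m 0 = 1 := by
  rw [← Nat.cast_zero, tE_natCast, coeff_zero_eq_constantCoeff_apply, map_pow]
  simp [T]

theorem tE_one (m : ℕ) : tE m 1 = -m := by
  have h := tE_two_mul_add_one m 0
  rw [sum_eq_single_of_mem 0 (by simp) fun j _ hj => by rw [tE_of_neg m (by omega), mul_zero]] at h
  simp only [Nat.cast_zero, mul_zero, zero_add, sub_zero, tE_zero, Nat.choose_one_right,
    mul_one] at h
  exact h

theorem stmt2_general (m : ℕ) :
    tE m 0 = 1 ∧ tE m 1 = -(m : ℤ) ∧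
      (∀ n : ℕ,
        tE m (2 * (n : ℤ)) =
          ∑ j ∈ Finset.range (m / 2 + 1),
            (m.choose (2 * j) : ℤ) * tE m ((n : ℤ) - (j : ℤ))) ∧
      ∀ n : ℕ,
        tE m (2 * (n : ℤ) + 1) =
          -∑ j ∈ Finset.range ((m - 1) / 2 + 1),
            (m.choose (2 * j + 1) : ℤ) * tE m ((n : ℤ) - (j : ℤ)) := by
  exact ⟨tE_zero m, tE_one m, tE_two_mul m, tE_two_mul_add_one m⟩

theorem stmt2 (m : ℕ) (hm : 1 ≤ m) :
    tE m 0 = 1 ∧ tE m 1 = -(m : ℤ) ∧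
      (∀ n : ℕ,
        tE m (2 * (n : ℤ)) =
          ∑ j ∈ Finset.range (m / 2 + 1),
            (m.choose (2 * j) : ℤ) * tE m ((n : ℤ) - (j : ℤ))) ∧
      ∀ n : ℕ,
        tE m (2 * (n : ℤ) + 1) =
          -∑ j ∈ Finset.range ((m - 1) / 2 + 1),
            (m.choose (2 * j + 1) : ℤ) * tE m ((n : ℤ) - (j : ℤ)) :=
  stmt2_general m
end

section
/- Let n ∈ ℕ₊ be written (uniquely) as n = Σ_{j=0}^{d} 4^j·a_j with a_j ∈ {0,1,3,6} for j < d and a_d ∈ {1,2,3,6}. Let k be the least index j with a_j ∉ {3,6} (and k = d+1 if all a_j ∈ {3,6}). Then: t_3(n) = 0 if and only if k = d and a_d = 2; and if t_3(n) ≠ 0, then ν₂(t_3(n)) = 3k. -/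
open PowerSeries

section Bisection

variable {R : Type*} [CommRing R]

theorem coeff_two_mul_expand_add_X_mul_expand (g h : R⟦X⟧) (m : ℕ) :
    coeff (2 * m) (expand 2 two_ne_zero g + X * expand 2 two_ne_zero h) = coeff m g := by
  rw [map_add, coeff_expand_mul, add_eq_left]
  cases m with
  | zero => exact coeff_zero_X_mul _
  | succ m =>
    rw [show 2 * (m + 1) = 2 * m + 1 + 1 by ring, coeff_succ_X_mul,
      coeff_expand_of_not_dvd _ _ _ (by omega)]

theorem coeff_two_mul_add_one_expand_add_X_mul_expand (g h : R⟦X⟧) (m : ℕ) :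
    coeff (2 * m + 1) (expand 2 two_ne_zero g + X * expand 2 two_ne_zero h) = coeff m h := by
  rw [map_add, coeff_succ_X_mul, coeff_expand_mul, coeff_expand_of_not_dvd _ _ _ (by omega),
    zero_add]

theorem coeff_ofNat_mul (f : R⟦X⟧) (n c : ℕ) [c.AtLeastTwo] :
    coeff n ((OfNat.ofNat c : R⟦X⟧) * f) = OfNat.ofNat c * coeff n f := by
  rw [← map_ofNat C, coeff_C_mul]

end Bisection

theorem coeff_T (n : ℕ) : coeff n T = (-1) ^ (Nat.digits 2 n).sum := coeff_mk _ _

theorem coeff_T_two_mul (m : ℕ) : coeff (2 * m) T = coeff m T := by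
  rcases m.eq_zero_or_pos with rfl | hm
  · rfl
  · rw [coeff_T, coeff_T, Nat.digits_def' one_lt_two (by omega)]
    simp

theorem coeff_T_two_mul_add_one (m : ℕ) : coeff (2 * m + 1) T = -coeff m T := by
  rw [coeff_T, coeff_T, Nat.digits_def' one_lt_two (by omega),
    show (2 * m + 1) % 2 = 1 by omega, show (2 * m + 1) / 2 = m by omega]
  simp [pow_add]

theorem T_eq_expand_add_X_mul_expand :
    T = expand 2 two_ne_zero T + X * expand 2 two_ne_zero (-T) := by
  ext n
  obtain ⟨m, rfl | rfl⟩ := Nat.even_or_odd' n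
  · rw [coeff_two_mul_expand_add_X_mul_expand, coeff_T_two_mul]
  · rw [coeff_two_mul_add_one_expand_add_X_mul_expand, coeff_T_two_mul_add_one, map_neg]

theorem T_pow_three_eq_expand_add_X_mul_expand :
    T ^ 3 = expand 2 two_ne_zero ((1 + 3 * X) * T ^ 3) +
      X * expand 2 two_ne_zero (-(3 + X) * T ^ 3) := by
  conv_lhs => rw [T_eq_expand_add_X_mul_expand]
  simp only [map_neg, map_mul, map_add, map_pow, map_one, map_ofNat, expand_X]
  ring

theorem coeff_T_pow_three_four_mul_add_three (M : ℕ) :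
    coeff (4 * M + 3) (T ^ 3) = 8 * coeff M (T ^ 3) := by
  have hsplit : -(3 + X) * T ^ 3 = expand 2 two_ne_zero ((-3 - 6 * X + X ^ 2) * T ^ 3) +
      X * expand 2 two_ne_zero (8 * T ^ 3) := by
    conv_lhs => rw [T_pow_three_eq_expand_add_X_mul_expand]
    simp only [map_neg, map_mul, map_add, map_sub, map_pow, map_one, map_ofNat, expand_X]
    ring
  calc coeff (4 * M + 3) (T ^ 3) = coeff (2 * (2 * M + 1) + 1) (T ^ 3) := by ring_nf
    _ = coeff (2 * M + 1) (-(3 + X) * T ^ 3) := by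
      conv_lhs => rw [T_pow_three_eq_expand_add_X_mul_expand]
      exact coeff_two_mul_add_one_expand_add_X_mul_expand _ _ _
    _ = 8 * coeff M (T ^ 3) := by
      rw [hsplit, coeff_two_mul_add_one_expand_add_X_mul_expand, coeff_ofNat_mul]

theorem coeff_T_pow_three_four_mul_add_six (M : ℕ) :
    coeff (4 * M + 6) (T ^ 3) = 8 * coeff M (T ^ 3) := by
  have hsplit : (1 + 3 * X) * T ^ 3 = expand 2 two_ne_zero ((1 - 6 * X - 3 * X ^ 2) * T ^ 3) +
      X * expand 2 two_ne_zero (X * (8 * T ^ 3)) := by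
    conv_lhs => rw [T_pow_three_eq_expand_add_X_mul_expand]
    simp only [map_neg, map_mul, map_add, map_sub, map_pow, map_one, map_ofNat, expand_X]
    ring
  calc coeff (4 * M + 6) (T ^ 3) = coeff (2 * (2 * (M + 1) + 1)) (T ^ 3) := by ring_nf
    _ = coeff (2 * (M + 1) + 1) ((1 + 3 * X) * T ^ 3) := by
      conv_lhs => rw [T_pow_three_eq_expand_add_X_mul_expand]
      exact coeff_two_mul_expand_add_X_mul_expand _ _ _
    _ = 8 * coeff M (T ^ 3) := by
      rw [hsplit, coeff_two_mul_add_one_expand_add_X_mul_expand, coeff_succ_X_mul,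
        coeff_ofNat_mul]

theorem coeff_T_pow_three_two : coeff 2 (T ^ 3) = 0 := by
  have h0 : coeff 0 (T ^ 3) = 1 := by
    rw [coeff_zero_eq_constantCoeff_apply, map_pow, ← coeff_zero_eq_constantCoeff_apply, coeff_T]
    rfl
  have h1 : coeff 1 (T ^ 3) = -3 := by
    rw [show 1 = 2 * 0 + 1 from rfl, T_pow_three_eq_expand_add_X_mul_expand,
      coeff_two_mul_add_one_expand_add_X_mul_expand, neg_mul, add_mul, map_neg, map_add,
      coeff_ofNat_mul, coeff_zero_X_mul, h0]
    rfl
  rw [show 2 = 2 * 1 from rfl, T_pow_three_eq_expand_add_X_mul_expand,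
    coeff_two_mul_expand_add_X_mul_expand, add_mul, one_mul, map_add, mul_assoc,
    coeff_ofNat_mul, coeff_succ_X_mul, h0, h1]
  norm_num

theorem map_T_zmod_two : map (Int.castRingHom (ZMod 2)) T = mk 1 := by
  ext n
  have : (-1 : ZMod 2) = 1 := by decide
  simp [coeff_map, coeff_T, this]

theorem intCast_coeff_T_pow_three (n : ℕ) :
    ((coeff n (T ^ 3) : ℤ) : ZMod 2) = (n + 2).choose 2 := by
  have h := congrArg (coeff n) (mk_one_pow_eq_mk_choose_add (S := ZMod 2) 2)
  rw [← map_T_zmod_two, ← map_pow, coeff_map, coeff_mk, add_comm 2 n] at h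
  exact h

theorem odd_choose_two_of_mod_four_le_one {n : ℕ} (hn : n % 4 ≤ 1) : Odd ((n + 2).choose 2) := by
  have hchoose : (n + 2).choose 2 * 2 = (n + 2) * (n + 1) := by
    simpa using (Nat.add_one_mul_choose_eq (n + 1) 1).symm
  have hprod : (n + 2) * (n + 1) % 4 = 2 := by
    rw [Nat.mul_mod]
    rcases (by omega : n % 4 = 0 ∨ n % 4 = 1) with h | h <;> simp [Nat.add_mod, h]
  rw [Nat.odd_iff]
  omega

theorem odd_coeff_T_pow_three {n : ℕ} (hn : n % 4 ≤ 1) : Odd (coeff n (T ^ 3)) := by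
  rw [← ZMod.intCast_eq_one_iff_odd, intCast_coeff_T_pow_three, ZMod.natCast_eq_one_iff_odd]
  exact odd_choose_two_of_mod_four_le_one hn

theorem coeff_T_pow_three_base_four (a : ℕ → ℕ) (k R : ℕ) (ha : ∀ j < k, a j = 3 ∨ a j = 6) :
    coeff (∑ j ∈ Finset.range k, 4 ^ j * a j + 4 ^ k * R) (T ^ 3) = 8 ^ k * coeff R (T ^ 3) := by
  induction k generalizing a with
  | zero => simp
  | succ k ih =>
    have hsplit : ∑ j ∈ Finset.range (k + 1), 4 ^ j * a j + 4 ^ (k + 1) * R =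
        4 * (∑ j ∈ Finset.range k, 4 ^ j * a (j + 1) + 4 ^ k * R) + a 0 := by
      rw [Finset.sum_range_succ', mul_add, Finset.mul_sum]
      simp only [pow_succ]
      ring_nf
    have ih' := ih (fun j => a (j + 1)) (fun j hj => ha (j + 1) (by omega))
    rw [hsplit]
    rcases ha 0 k.succ_pos with h | h
    · rw [h, coeff_T_pow_three_four_mul_add_three, ih']; ring
    · rw [h, coeff_T_pow_three_four_mul_add_six, ih']; ring

theorem sum_range_four_pow_mul_mod_four_le_one (a : ℕ → ℕ) (m : ℕ)
    (h : m = 0 ∨ a 0 = 0 ∨ a 0 = 1) : (∑ j ∈ Finset.range m, 4 ^ j * a j) % 4 ≤ 1 := by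
  rcases m with _ | m
  · simp
  have h4 : 4 ∣ ∑ j ∈ Finset.range m, 4 ^ (j + 1) * a (j + 1) :=
    Finset.dvd_sum fun j _ => Dvd.dvd.mul_right (dvd_pow_self 4 j.succ_ne_zero) _
  rw [Finset.sum_range_succ', pow_zero, one_mul]
  omega

theorem padicValInt_two_eight_pow_mul {u : ℤ} (hu : Odd u) (k : ℕ) :
    padicValInt 2 (8 ^ k * u) = 3 * k := by
  have hu0 : u ≠ 0 := by rintro rfl; simp at hu
  have h8 : (8 : ℤ) ^ k = ((2 ^ (3 * k) : ℕ) : ℤ) := by push_cast; rw [pow_mul]; norm_num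
  rw [padicValInt.mul (by positivity) hu0, h8, padicValInt.of_nat, padicValNat.prime_pow,
    padicValInt.eq_zero_of_not_dvd (by simpa [← even_iff_two_dvd] using hu), add_zero]

theorem stmt7_general (n : ℕ) (d : ℕ) (a : ℕ → ℕ)
    (hsum : n = ∑ j ∈ Finset.range (d + 1), 4 ^ j * a j)
    (hdig : ∀ j < d, a j = 0 ∨ a j = 1 ∨ a j = 3 ∨ a j = 6)
    (hlead : a d = 1 ∨ a d = 2 ∨ a d = 3 ∨ a d = 6)
    (k : ℕ) (hk : k ≤ d + 1)
    (hkleast : ∀ j < k, a j = 3 ∨ a j = 6)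
    (hknot : k ≤ d → ¬(a k = 3 ∨ a k = 6)) :
    (PowerSeries.coeff (R := ℤ) n (T ^ 3) = 0 ↔ k = d ∧ a d = 2) ∧
    (PowerSeries.coeff (R := ℤ) n (T ^ 3) ≠ 0 →
      padicValInt 2 (PowerSeries.coeff (R := ℤ) n (T ^ 3)) = 3 * k) := by
  obtain ⟨m, hm⟩ : ∃ m, d + 1 = k + m := ⟨d + 1 - k, by omega⟩
  set R := ∑ j ∈ Finset.range m, 4 ^ j * a (k + j) with hR
  have hdecomp : n = ∑ j ∈ Finset.range k, 4 ^ j * a j + 4 ^ k * R := by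
    simp only [hsum, hm, Finset.sum_range_add, hR, Finset.mul_sum, pow_add, mul_assoc]
  have hc : coeff n (T ^ 3) = 8 ^ k * coeff R (T ^ 3) :=
    hdecomp ▸ coeff_T_pow_three_base_four a k R hkleast
  by_cases hexc : k = d ∧ a d = 2
  · obtain ⟨rfl, h2⟩ := hexc
    have hR2 : R = 2 := by simp [hR, show m = 1 by omega, h2]
    simp [hc, hR2, coeff_T_pow_three_two, h2]
  have hlow : m = 0 ∨ a k = 0 ∨ a k = 1 := by
    rcases Nat.lt_trichotomy k d with hkd | rfl | hkd
    · have := hdig k hkd; have := hknot hkd.le; omega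
    · have := hknot le_rfl; omega
    · omega
  have hodd : Odd (coeff R (T ^ 3)) := odd_coeff_T_pow_three
    (sum_range_four_pow_mul_mod_four_le_one (fun j => a (k + j)) m hlow)
  have hne : coeff n (T ^ 3) ≠ 0 := by
    rw [hc]
    exact mul_ne_zero (by positivity) (by rintro h; simp [h] at hodd)
  refine ⟨⟨fun h => absurd h hne, fun h => absurd h hexc⟩, fun _ => ?_⟩
  rw [hc]
  exact padicValInt_two_eight_pow_mul hodd k

theorem stmt7 (n : ℕ) (hn : 1 ≤ n) (d : ℕ) (a : ℕ → ℕ)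
    (hsum : n = ∑ j ∈ Finset.range (d + 1), 4 ^ j * a j)
    (hdig : ∀ j < d, a j = 0 ∨ a j = 1 ∨ a j = 3 ∨ a j = 6)
    (hlead : a d = 1 ∨ a d = 2 ∨ a d = 3 ∨ a d = 6)
    (k : ℕ) (hk : k ≤ d + 1)
    (hkleast : ∀ j < k, a j = 3 ∨ a j = 6)
    (hknot : k ≤ d → ¬(a k = 3 ∨ a k = 6)) :
    (PowerSeries.coeff (R := ℤ) n (T ^ 3) = 0 ↔ k = d ∧ a d = 2) ∧
    (PowerSeries.coeff (R := ℤ) n (T ^ 3) ≠ 0 →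
      padicValInt 2 (PowerSeries.coeff (R := ℤ) n (T ^ 3)) = 3 * k) :=
  stmt7_general n d a hsum hdig hlead k hk hkleast hknot
end

section
/- For all k, n ∈ ℕ one has t_{2^k}(n) ≠ 0. Moreover, defining a : ℕ₊ → ℕ by a(1) = 2, a(2k) = 4·a(k) + 3 and a(2k+1) = 4·a(k) + 6 for k ≥ 1, one has: t_3(n) = 0 if and only if n = a(k) for some k ∈ ℕ₊. -/
def a : ℕ → ℕ
  | 0 => 0
  | 1 => 2
  | n + 2 =>
      if (n + 2) % 2 = 0 then 4 * a ((n + 2) / 2) + 3 else 4 * a ((n + 2) / 2) + 6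
  decreasing_by all_goals exact Nat.div_lt_self (by omega) (by omega)

/-!
Both parts rest on the functional equation `T(x) = (1 - x) T(x²)`, which gives the recursion
`t_m(n) = (-1)ⁿ ∑_{2i ≤ n} C(m, n - 2i) t_m(i)`.

For `m = 2ᵏ`, compare `t_m` with the coefficients `b(n) = C(n + m - 1, m - 1)` of `(1 - x)⁻ᵐ`. Since
`(1 - x)⁻ᵐ = (1 + x)ᵐ (1 - x²)⁻ᵐ`, they satisfy the same recursion without the sign, and Legendre's
formula shows that, because `s₂(m) = 1`, no term of the recursion for `b(n)` has smaller `2`-adic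
valuation than `b(n)` itself. By induction, the terms of the two recursions agree modulo
`2^(ν₂(b(n)) + 1)`, so `t_m(n)` has the same `2`-adic valuation as `b(n) > 0`.

For `m = 3` the recursion gives `t₃(4n + 3) = t₃(4n + 6) = 8 t₃(n)` and `t₃(2) = 0`, while `t₃(n)`
is odd for `n ≡ 0, 1 (mod 4)`; so the zeros of `t₃` are exactly the values of `a`.
-/

open PowerSeries Finset

namespace ThueMorse

section CommRing

variable {R : Type*} [CommRing R]

theorem coeff_expand_two_mul (F P : R⟦X⟧) (n : ℕ) :
    coeff n (expand 2 two_ne_zero F * P) =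
      ∑ i ∈ range (n / 2 + 1), coeff i F * coeff (n - 2 * i) P := by
  rw [coeff_mul, Finset.Nat.sum_antidiagonal_eq_sum_range_succ (fun j l => coeff j _ * coeff l P)]
  have hinj : Set.InjOn (2 * ·) (range (n / 2 + 1) : Set ℕ) := fun i _ j _ h => by simpa using h
  rw [← Finset.sum_subset (s₁ := (range (n / 2 + 1)).image (2 * ·)), Finset.sum_image hinj]
  · simp only [coeff_expand_mul]
  · intro j hj
    simp only [mem_image, mem_range] at hj ⊢
    omega
  · intro j hjn hj
    have hodd : ¬ 2 ∣ j := fun ⟨i, hi⟩ => hj <| mem_image.2 ⟨i, by grind, hi.symm⟩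
    rw [coeff_expand_of_not_dvd _ _ _ hodd, zero_mul]

theorem coeff_one_add_X_pow (m n : ℕ) : coeff n ((1 + X : R⟦X⟧) ^ m) = m.choose n := by
  have : ((1 + X : R⟦X⟧)) ^ m = (((1 + Polynomial.X) ^ m : Polynomial R) : R⟦X⟧) := by
    simp
  rw [this, Polynomial.coeff_coe, Polynomial.coeff_one_add_X_pow]

theorem coeff_one_sub_X_pow (m n : ℕ) :
    coeff n ((1 - X : R⟦X⟧) ^ m) = (-1) ^ n * m.choose n := by
  have : (1 - X : R⟦X⟧) = rescale (-1) (1 + X) := by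
    rw [map_add, map_one, rescale_X, map_neg, map_one, neg_one_mul, sub_eq_add_neg]
  rw [this, ← map_pow, coeff_rescale, coeff_one_add_X_pow]

theorem invOneSubPow_val_eq_expand_mul (d : ℕ) :
    (invOneSubPow R d).val = expand 2 two_ne_zero (invOneSubPow R d).val * (1 + X) ^ d := by
  have h₁ : (invOneSubPow R d).val * (1 - X) ^ d = 1 := by
    rw [← invOneSubPow_inv_eq_one_sub_pow]; exact (invOneSubPow R d).val_inv
  have h₂ := congrArg (expand 2 two_ne_zero) h₁
  rw [map_mul, map_pow, map_sub, map_one, expand_X,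
    show (1 - X ^ 2 : R⟦X⟧) = (1 - X) * (1 + X) by ring, mul_pow] at h₂
  linear_combination (expand 2 two_ne_zero (invOneSubPow R d).val * (1 + X) ^ d) * h₁ -
    (invOneSubPow R d).val * h₂

end CommRing

theorem add_choose_eq_sum (d n : ℕ) :
    (d + n).choose d = ∑ i ∈ range (n / 2 + 1), (d + i).choose d * (d + 1).choose (n - 2 * i) := by
  have h := congrArg (coeff n) (invOneSubPow_val_eq_expand_mul (R := ℤ) (d + 1))
  simp only [invOneSubPow_val_succ_eq_mk_add_choose, coeff_expand_two_mul, coeff_mk,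
    coeff_one_add_X_pow] at h
  exact_mod_cast h

theorem coeff_T (n : ℕ) : coeff n T = (-1) ^ (Nat.digits 2 n).sum := coeff_mk _ _

theorem coeff_T_two_mul (n : ℕ) : coeff (2 * n) T = coeff n T := by
  rcases n.eq_zero_or_pos with rfl | hn
  · rfl
  simp [coeff_T, Nat.digits_def' one_lt_two (by omega : 0 < 2 * n)]

theorem coeff_T_two_mul_add_one (n : ℕ) : coeff (2 * n + 1) T = -coeff n T := by
  simp [coeff_T, Nat.add_div, pow_add]

theorem T_eq_expand_mul : T = expand 2 two_ne_zero T * (1 - X) := by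
  ext n
  rw [mul_sub, mul_one, map_sub]
  obtain ⟨m, rfl | rfl⟩ := Nat.even_or_odd' n
  · rcases m with _ | m
    · simp [coeff_zero_mul_X]
    rw [coeff_expand_mul, coeff_T_two_mul, show 2 * (m + 1) = 2 * m + 1 + 1 by ring,
      coeff_succ_mul_X, coeff_expand_of_not_dvd 2 two_ne_zero T (by omega), sub_zero]
  · rw [coeff_succ_mul_X, coeff_expand_of_not_dvd 2 two_ne_zero T (by omega), coeff_expand_mul,
      coeff_T_two_mul_add_one, zero_sub]

theorem T_pow_eq_expand_mul (m : ℕ) : T ^ m = expand 2 two_ne_zero (T ^ m) * (1 - X) ^ m := by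
  conv_lhs => rw [T_eq_expand_mul]
  rw [mul_pow, map_pow]

theorem coeff_T_pow (m n : ℕ) :
    coeff n (T ^ m) = (-1) ^ n * ∑ i ∈ range (n / 2 + 1), coeff i (T ^ m) * m.choose (n - 2 * i) := by
  conv_lhs => rw [T_pow_eq_expand_mul, coeff_expand_two_mul]
  rw [mul_sum]
  refine sum_congr rfl fun i hi => ?_
  have hn : n = (n - 2 * i) + 2 * i := by grind
  rw [coeff_one_sub_X_pow, hn, pow_add, pow_mul, ← hn]
  ring

theorem coeff_zero_T_pow (m : ℕ) : coeff 0 (T ^ m) = 1 := by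
  rw [coeff_zero_eq_constantCoeff_apply, map_pow, ← coeff_zero_eq_constantCoeff_apply, coeff_T]
  simp

/-- `x / y` is a `2`-adic unit, or `x = y = 0`. -/
def SameTwoAdicVal (x y : ℤ) : Prop :=
  ∃ u w : ℤ, Odd u ∧ Odd w ∧ u * x = w * y

namespace SameTwoAdicVal

variable {x y : ℤ}

theorem ne_zero (h : SameTwoAdicVal x y) (hy : y ≠ 0) : x ≠ 0 := by
  obtain ⟨u, w, -, hw, h⟩ := h
  rintro rfl
  have hw0 : w ≠ 0 := by rintro rfl; exact Int.not_even_iff_odd.2 hw Even.zero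
  exact mul_ne_zero hw0 hy (by rw [← h, mul_zero])

theorem of_odd_mul {v : ℤ} (hv : Odd v) (h : SameTwoAdicVal (v * x) y) : SameTwoAdicVal x y := by
  obtain ⟨u, w, hu, hw, h⟩ := h
  exact ⟨u * v, w, hu.mul hv, hw, by rw [mul_assoc, h]⟩

theorem two_pow_succ_dvd_mul_sub (h : SameTwoAdicVal x y) {e : ℕ} {c : ℤ} (hc : 2 ^ e ∣ y * c) :
    2 ^ (e + 1) ∣ x * c - y * c := by
  obtain ⟨u, w, hu, hw, h⟩ := h
  have hcop : IsCoprime ((2 : ℤ) ^ (e + 1)) u :=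
    ((Prime.coprime_iff_not_dvd Int.prime_two).2
      (Int.not_even_iff_odd.2 hu ∘ even_iff_two_dvd.2)).pow_left
  refine hcop.dvd_of_dvd_mul_left ?_
  rw [show u * (x * c - y * c) = y * c * (w - u) by linear_combination c * h, pow_succ]
  exact mul_dvd_mul hc (even_iff_two_dvd.1 (hw.sub_odd hu))

theorem of_two_pow_succ_dvd_sub {e : ℕ} (hy : 2 ^ e ∣ y) (hy' : ¬ 2 ^ (e + 1) ∣ y)
    (h : 2 ^ (e + 1) ∣ x - y) : SameTwoAdicVal x y := by
  obtain ⟨w, rfl⟩ := hy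
  obtain ⟨z, hz⟩ := h
  have hw : Odd w := Int.not_even_iff_odd.1 fun ⟨v, hv⟩ => hy' ⟨v, by rw [hv, pow_succ]; ring⟩
  exact ⟨w, w + 2 * z, hw, hw.add_even (even_two_mul z), by linear_combination w * hz⟩

end SameTwoAdicVal

section FactorialValuation

open Nat

variable (p : ℕ) [Fact p.Prime]

theorem padicValNat_factorial_add_factorial_le (a b : ℕ) :
    padicValNat p a ! + padicValNat p b ! ≤ padicValNat p (a + b)! := by
  rw [← padicValNat.mul (factorial_ne_zero a) (factorial_ne_zero b)]
  exact (padicValNat_dvd_iff_le (factorial_ne_zero _)).1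
    (pow_padicValNat_dvd.trans (factorial_mul_factorial_dvd_factorial_add a b))

theorem padicValNat_choose_add_factorial (a b : ℕ) :
    padicValNat p ((a + b).choose a) + padicValNat p a ! + padicValNat p b ! =
      padicValNat p (a + b)! := by
  have h := add_choose_mul_factorial_mul_factorial b a
  rw [add_comm b a] at h
  rw [← h, padicValNat.mul (mul_ne_zero (choose_pos (by omega)).ne' (factorial_ne_zero b))
      (factorial_ne_zero a),
    padicValNat.mul (choose_pos (by omega)).ne' (factorial_ne_zero b)]
  ring

theorem padicValNat_two_factorial_two_mul_add_one (m : ℕ) :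
    padicValNat 2 (2 * m + 1)! = padicValNat 2 m ! + m := by
  rw [padicValNat_factorial_mul_add m one_lt_two, padicValNat_factorial_mul]

theorem padicValNat_two_factorial_two_pow (k : ℕ) : padicValNat 2 (2 ^ k)! + 1 = 2 ^ k := by
  induction k with
  | zero => simp
  | succ k ih => rw [pow_succ', padicValNat_factorial_mul]; omega

end FactorialValuation

theorem two_pow_padicValNat_choose_dvd {d k : ℕ} (hd : d + 1 = 2 ^ k) (i j : ℕ) :
    2 ^ padicValNat 2 ((d + (2 * i + j)).choose d) ∣ (d + i).choose d * (d + 1).choose j := by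
  rcases lt_or_ge (d + 1) j with hj | hj
  · rw [Nat.choose_eq_zero_of_lt hj, mul_zero]
    exact dvd_zero _
  obtain ⟨r, hr⟩ := Nat.exists_eq_add_of_le hj
  have hi₀ := (Nat.choose_pos (Nat.le_add_right d i)).ne'
  have hj₀ := (Nat.choose_pos hj).ne'
  rw [padicValNat_dvd_iff_le (mul_ne_zero hi₀ hj₀), padicValNat.mul hi₀ hj₀, hr]
  -- with `w x = ν₂ (x !)`: superadditivity of `w`, `w (2x + 1) = w (2x) = w x + x`,
  -- and `w (2 ^ k) = 2 ^ k - 1`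
  have hn := padicValNat_choose_add_factorial 2 d (2 * i + j)
  have hi := padicValNat_choose_add_factorial 2 d i
  have hj := padicValNat_choose_add_factorial 2 j r
  have hsuper₁ := padicValNat_factorial_add_factorial_le 2 (2 * i) j
  have hsuper₂ := padicValNat_factorial_add_factorial_le 2 (d + (2 * i + j)) r
  rw [show d + (2 * i + j) + r = 2 * (d + i) + 1 by omega,
    padicValNat_two_factorial_two_mul_add_one] at hsuper₂
  have hdouble := padicValNat_factorial_mul (p := 2) i
  have hpow := padicValNat_two_factorial_two_pow k
  rw [← hd, hr] at hpow
  omega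

theorem sameTwoAdicVal_coeff_T_pow {d k : ℕ} (hd : d + 1 = 2 ^ k) (n : ℕ) :
    SameTwoAdicVal (coeff n (T ^ (d + 1))) ((d + n).choose d) := by
  induction n using Nat.strong_induction_on with
  | _ n ih =>
  rcases n.eq_zero_or_pos with rfl | hn
  · rw [coeff_zero_T_pow, add_zero, Nat.choose_self, Nat.cast_one]
    exact ⟨1, 1, odd_one, odd_one, rfl⟩
  have hne := (Nat.choose_pos (Nat.le_add_right d n)).ne'
  have ht : (-1) ^ n * coeff n (T ^ (d + 1)) =
      ∑ i ∈ range (n / 2 + 1), coeff i (T ^ (d + 1)) * (d + 1).choose (n - 2 * i) := by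
    rw [coeff_T_pow, ← mul_assoc, ← pow_add, Even.neg_one_pow ⟨n, rfl⟩, one_mul]
  refine .of_odd_mul (odd_neg_one.pow (n := n)) <|
    .of_two_pow_succ_dvd_sub (e := padicValNat 2 ((d + n).choose d))
      (by exact_mod_cast pow_padicValNat_dvd) (by exact_mod_cast pow_succ_padicValNat_not_dvd hne) ?_
  rw [ht, congrArg (Nat.cast : ℕ → ℤ) (add_choose_eq_sum d n), Nat.cast_sum, ← sum_sub_distrib]
  refine dvd_sum fun i hi => ?_
  have hi : 2 * i ≤ n := by grind
  have hdvd := two_pow_padicValNat_choose_dvd hd i (n - 2 * i)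
  rw [show 2 * i + (n - 2 * i) = n by omega] at hdvd
  push_cast
  exact (ih i (by omega)).two_pow_succ_dvd_mul_sub (by exact_mod_cast hdvd)

theorem coeff_T_pow_two_pow_ne_zero (k n : ℕ) : coeff n (T ^ 2 ^ k) ≠ 0 := by
  obtain ⟨d, hd⟩ : ∃ d, d + 1 = 2 ^ k := ⟨2 ^ k - 1, Nat.sub_add_cancel Nat.one_le_two_pow⟩
  rw [← hd]
  exact (sameTwoAdicVal_coeff_T_pow hd n).ne_zero
    (by exact_mod_cast (Nat.choose_pos (Nat.le_add_right d n)).ne')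

theorem coeff_T_pow_three_two_mul_add_two (m : ℕ) :
    coeff (2 * m + 2) (T ^ 3) = coeff (m + 1) (T ^ 3) + 3 * coeff m (T ^ 3) := by
  rw [coeff_T_pow, Even.neg_one_pow ⟨m + 1, by ring⟩, one_mul,
    show (2 * m + 2) / 2 + 1 = m + 2 by omega, sum_range_succ, sum_range_succ,
    sum_eq_zero fun i hi => by rw [Nat.choose_eq_zero_of_lt (by grind), Nat.cast_zero, mul_zero]]
  simp only [show 2 * m + 2 - 2 * m = 2 by omega, show 2 * m + 2 - 2 * (m + 1) = 0 by omega,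
    Nat.choose_succ_self_right, Nat.choose_zero_right, Nat.cast_one, zero_add]
  ring

theorem coeff_T_pow_three_two_mul_add_three (m : ℕ) :
    coeff (2 * m + 3) (T ^ 3) = -(3 * coeff (m + 1) (T ^ 3) + coeff m (T ^ 3)) := by
  rw [coeff_T_pow, Odd.neg_one_pow ⟨m + 1, by ring⟩, neg_one_mul,
    show (2 * m + 3) / 2 + 1 = m + 2 by omega, sum_range_succ, sum_range_succ,
    sum_eq_zero fun i hi => by rw [Nat.choose_eq_zero_of_lt (by grind), Nat.cast_zero, mul_zero]]
  simp only [show 2 * m + 3 - 2 * m = 3 by omega, show 2 * m + 3 - 2 * (m + 1) = 1 by omega,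
    Nat.choose_self, Nat.choose_one_right, Nat.cast_ofNat, Nat.cast_one, zero_add]
  ring

theorem coeff_one_T_pow_three : coeff 1 (T ^ 3) = -3 := by
  rw [coeff_T_pow]
  simp [coeff_zero_T_pow]

theorem coeff_two_T_pow_three : coeff 2 (T ^ 3) = 0 := by
  rw [coeff_T_pow_three_two_mul_add_two 0, coeff_one_T_pow_three, coeff_zero_T_pow]
  norm_num

theorem coeff_T_pow_three_four_mul_add_three (m : ℕ) :
    coeff (4 * m + 3) (T ^ 3) = 8 * coeff m (T ^ 3) := by
  rcases m with _ | m
  · rw [coeff_T_pow_three_two_mul_add_three 0, coeff_one_T_pow_three, coeff_zero_T_pow]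
    norm_num
  rw [show 4 * (m + 1) + 3 = 2 * (2 * m + 2) + 3 by ring, coeff_T_pow_three_two_mul_add_three,
    show 2 * m + 2 + 1 = 2 * m + 3 by ring, coeff_T_pow_three_two_mul_add_three,
    coeff_T_pow_three_two_mul_add_two]
  ring

theorem coeff_T_pow_three_four_mul_add_six (m : ℕ) :
    coeff (4 * m + 6) (T ^ 3) = 8 * coeff m (T ^ 3) := by
  rw [show 4 * m + 6 = 2 * (2 * m + 2) + 2 by ring, coeff_T_pow_three_two_mul_add_two,
    show 2 * m + 2 + 1 = 2 * m + 3 by ring, coeff_T_pow_three_two_mul_add_three,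
    coeff_T_pow_three_two_mul_add_two]
  ring

theorem even_coeff_T_pow_three {n : ℕ} (hn : 2 ≤ n % 4) : Even (coeff n (T ^ 3)) := by
  obtain ⟨m, rfl | rfl⟩ : ∃ m, n = 4 * m + 2 ∨ n = 4 * m + 3 := ⟨n / 4, by omega⟩
  · rcases m with _ | m
    · rw [coeff_two_T_pow_three]; exact Even.zero
    rw [show 4 * (m + 1) + 2 = 4 * m + 6 by ring, coeff_T_pow_three_four_mul_add_six]
    exact ⟨4 * coeff m (T ^ 3), by ring⟩
  · rw [coeff_T_pow_three_four_mul_add_three]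
    exact ⟨4 * coeff m (T ^ 3), by ring⟩

theorem odd_coeff_T_pow_three {n : ℕ} (hn : n % 4 < 2) : Odd (coeff n (T ^ 3)) := by
  induction n using Nat.strong_induction_on with
  | _ n ih =>
  -- exactly one of `2m + 1`, `2m + 2` is `0` or `1` modulo `4`
  have hsum (m : ℕ) (hm : 4 * m + 4 ≤ n) :
      Odd (coeff (2 * m + 2) (T ^ 3) + coeff (2 * m + 1) (T ^ 3)) := by
    rcases Nat.even_or_odd m with ⟨p, rfl⟩ | ⟨p, rfl⟩
    · exact (even_coeff_T_pow_three (by omega)).add_odd (ih _ (by omega) (by omega))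
    · exact (ih _ (by omega) (by omega)).add_even (even_coeff_T_pow_three (by omega))
  obtain ⟨m, rfl | rfl⟩ : ∃ m, n = 4 * m ∨ n = 4 * m + 1 := ⟨n / 4, by omega⟩
  · rcases m with _ | m
    · rw [coeff_zero_T_pow]; exact odd_one
    rw [show 4 * (m + 1) = 2 * (2 * m + 1) + 2 by ring, coeff_T_pow_three_two_mul_add_two]
    obtain ⟨r, hr⟩ := hsum m (by omega)
    exact ⟨r + coeff (2 * m + 1) (T ^ 3), by linear_combination hr⟩
  · rcases m with _ | m
    · rw [coeff_one_T_pow_three]; exact ⟨-2, by norm_num⟩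
    rw [show 4 * (m + 1) + 1 = 2 * (2 * m + 1) + 3 by ring, coeff_T_pow_three_two_mul_add_three,
      odd_neg, show 2 * m + 1 + 1 = 2 * m + 2 by ring]
    obtain ⟨r, hr⟩ := hsum m (by omega)
    exact ⟨r + coeff (2 * m + 2) (T ^ 3), by linear_combination hr⟩

theorem a_one : a 1 = 2 := by rw [a]

theorem a_two_mul {j : ℕ} (hj : j ≠ 0) : a (2 * j) = 4 * a j + 3 := by
  obtain ⟨j, rfl⟩ := Nat.exists_eq_succ_of_ne_zero hj
  rw [show 2 * (j + 1) = 2 * j + 2 by ring, a, if_pos (by omega),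
    show (2 * j + 2) / 2 = j + 1 by omega]

theorem a_two_mul_add_one {j : ℕ} (hj : j ≠ 0) : a (2 * j + 1) = 4 * a j + 6 := by
  obtain ⟨j, rfl⟩ := Nat.exists_eq_succ_of_ne_zero hj
  rw [show 2 * (j + 1) + 1 = 2 * j + 1 + 2 by ring, a, if_neg (by omega),
    show (2 * j + 1 + 2) / 2 = j + 1 by omega]

theorem coeff_T_pow_three_eq_zero_iff (n : ℕ) :
    coeff n (T ^ 3) = 0 ↔ ∃ k : ℕ, 1 ≤ k ∧ a k = n := by
  constructor
  · intro h
    induction n using Nat.strong_induction_on with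
    | _ n ih =>
    have hn : 2 ≤ n % 4 := by
      by_contra! hn
      exact Int.not_even_iff_odd.2 (odd_coeff_T_pow_three hn) (h ▸ Even.zero)
    obtain ⟨m, rfl | rfl⟩ : ∃ m, n = 4 * m + 2 ∨ n = 4 * m + 3 := ⟨n / 4, by omega⟩
    · rcases m with _ | m
      · exact ⟨1, le_rfl, a_one⟩
      rw [show 4 * (m + 1) + 2 = 4 * m + 6 by ring, coeff_T_pow_three_four_mul_add_six] at h
      obtain ⟨j, hj, rfl⟩ := ih m (by omega) (by simpa using h)
      exact ⟨2 * j + 1, by omega, by rw [a_two_mul_add_one (by omega)]; ring⟩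
    · rw [coeff_T_pow_three_four_mul_add_three] at h
      obtain ⟨j, hj, rfl⟩ := ih m (by omega) (by simpa using h)
      exact ⟨2 * j, by omega, a_two_mul (by omega)⟩
  · rintro ⟨k, hk, rfl⟩
    induction k using Nat.strong_induction_on with
    | _ k ih =>
    obtain ⟨j, rfl | rfl⟩ := Nat.even_or_odd' k
    · rw [a_two_mul (by omega), coeff_T_pow_three_four_mul_add_three, ih j (by omega) (by omega),
        mul_zero]
    · rcases j with _ | j
      · rw [a_one]; exact coeff_two_T_pow_three
      rw [a_two_mul_add_one (by omega), coeff_T_pow_three_four_mul_add_six,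
        ih (j + 1) (by omega) (by omega), mul_zero]

end ThueMorse

theorem stmt11 :
    (∀ k n : ℕ, PowerSeries.coeff n (T ^ 2 ^ k) ≠ 0) ∧
    ∀ n : ℕ, PowerSeries.coeff n (T ^ 3) = 0 ↔ ∃ k : ℕ, 1 ≤ k ∧ a k = n :=
  ⟨ThueMorse.coeff_T_pow_two_pow_ne_zero, ThueMorse.coeff_T_pow_three_eq_zero_iff⟩
end

section
/- For every n ∈ ℕ₊, the three integers t_2(n-1), t_2(n), t_2(n+1) do not all have the same sign; that is, it is not the case that all three are positive, and not the case that all three are negative. -/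
open PowerSeries

namespace PowerSeries

variable {R : Type*} [CommRing R]

theorem coeff_succ_one_sub_X_mul (ψ : R⟦X⟧) (m : ℕ) :
    coeff (m + 1) ((1 - X) * ψ) = coeff (m + 1) ψ - coeff m ψ := by
  rw [sub_mul, one_mul, map_sub, coeff_succ_X_mul]

theorem coeff_two_mul_one_sub_X_mul_expand (φ : R⟦X⟧) (n : ℕ) :
    coeff (2 * n) ((1 - X) * expand 2 two_ne_zero φ) = coeff n φ := by
  rcases n with _ | n
  · simp
  · rw [show 2 * (n + 1) = 2 * n + 1 + 1 by ring, coeff_succ_one_sub_X_mul,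
      coeff_expand_of_not_dvd (m := 2 * n + 1) _ _ _ (by omega), sub_zero,
      show 2 * n + 1 + 1 = 2 * (n + 1) by ring, coeff_expand_mul]

theorem coeff_two_mul_add_one_one_sub_X_mul_expand (φ : R⟦X⟧) (n : ℕ) :
    coeff (2 * n + 1) ((1 - X) * expand 2 two_ne_zero φ) = -coeff n φ := by
  rw [coeff_succ_one_sub_X_mul, coeff_expand_of_not_dvd (m := 2 * n + 1) _ _ _ (by omega),
    coeff_expand_mul, zero_sub]

theorem coeff_two_mul_add_one_one_sub_X_sq_mul_expand (φ : R⟦X⟧) (n : ℕ) :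
    coeff (2 * n + 1) ((1 - X) ^ 2 * expand 2 two_ne_zero φ) = -2 * coeff n φ := by
  rw [sq, mul_assoc, coeff_succ_one_sub_X_mul, coeff_two_mul_add_one_one_sub_X_mul_expand,
    coeff_two_mul_one_sub_X_mul_expand]
  ring

theorem coeff_two_mul_add_two_one_sub_X_sq_mul_expand (φ : R⟦X⟧) (n : ℕ) :
    coeff (2 * n + 2) ((1 - X) ^ 2 * expand 2 two_ne_zero φ) = coeff n φ + coeff (n + 1) φ := by
  rw [sq, mul_assoc, coeff_succ_one_sub_X_mul, coeff_two_mul_add_one_one_sub_X_mul_expand,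
    show 2 * n + 1 + 1 = 2 * (n + 1) by ring, coeff_two_mul_one_sub_X_mul_expand]
  ring

end PowerSeries

theorem one_sub_X_mul_expand_T : (1 - X) * expand 2 two_ne_zero T = T := by
  ext n
  obtain ⟨k, rfl | rfl⟩ := Nat.even_or_odd' n
  · rw [coeff_two_mul_one_sub_X_mul_expand]
    rcases eq_or_ne k 0 with rfl | hk
    · rfl
    · rw [coeff_T, coeff_T, ← zero_add (2 * k), Nat.digits_add 2 one_lt_two 0 k two_pos (.inr hk),
        List.sum_cons, zero_add]
  · rw [coeff_two_mul_add_one_one_sub_X_mul_expand, coeff_T, coeff_T, add_comm,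
      Nat.digits_add 2 one_lt_two 1 k one_lt_two (.inl one_ne_zero), List.sum_cons, pow_add,
      pow_one, neg_one_mul]

theorem T_sq_eq : T ^ 2 = (1 - X) ^ 2 * expand 2 two_ne_zero (T ^ 2) := by
  rw [map_pow, ← mul_pow, one_sub_X_mul_expand_T]

theorem coeff_T_sq_two_mul_add_one (n : ℕ) :
    coeff (2 * n + 1) (T ^ 2) = -2 * coeff n (T ^ 2) := by
  conv_lhs => rw [T_sq_eq]
  exact coeff_two_mul_add_one_one_sub_X_sq_mul_expand _ n

theorem coeff_T_sq_two_mul_add_two (n : ℕ) :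
    coeff (2 * n + 2) (T ^ 2) = coeff n (T ^ 2) + coeff (n + 1) (T ^ 2) := by
  conv_lhs => rw [T_sq_eq]
  exact coeff_two_mul_add_two_one_sub_X_sq_mul_expand _ n

section PosTriple

variable {R : Type*} [CommRing R] [LinearOrder R] [IsStrictOrderedRing R] {f : ℕ → R}

def PosTriple (f : ℕ → R) (m : ℕ) : Prop := 0 < f m ∧ 0 < f (m + 1) ∧ 0 < f (m + 2)

variable (hodd : ∀ n, f (2 * n + 1) = -2 * f n) (heven : ∀ n, f (2 * n + 2) = f n + f (n + 1))
include hodd heven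

theorem PosTriple.descend {m : ℕ} (h : PosTriple f m) : ∃ i, 4 * i + 6 = m ∧ PosTriple f i := by
  obtain ⟨h₀, h₁, h₂⟩ := h
  obtain ⟨k, rfl | rfl⟩ := Nat.even_or_odd' m
  · obtain ⟨j, rfl | rfl⟩ := Nat.even_or_odd' k
    · rcases j with _ | j
      · have := hodd 0
        ring_nf at *; linarith
      · have := heven (2 * j + 1); have := hodd (2 * j + 2); have := heven (2 * j + 2)
        have := hodd j; have := heven j; have := hodd (j + 1)
        ring_nf at *; linarith
    · rcases j with _ | i
      · have := hodd 0; have := heven 0; have := hodd 1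
        ring_nf at *; linarith
      · -- `f (4i+7) > 0` forces `f (i+1) > 0`, and then `f (4i+6), f (4i+8) > 0` give
        -- `f i > f (i+1)` and `f (i+2) > f (i+1)`.
        refine ⟨i, by ring, ?_⟩
        have := heven (2 * i + 2); have := hodd (2 * i + 3); have := heven (2 * i + 3)
        have := hodd (i + 1); have := heven (i + 1); have := heven i
        refine ⟨?_, ?_, ?_⟩ <;> ring_nf at * <;> linarith
  · have := hodd k; have := heven k; have := hodd (k + 1)
    ring_nf at *; linarith

theorem not_posTriple (m : ℕ) : ¬PosTriple f m := by
  induction m using Nat.strong_induction_on with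
  | _ m ih =>
    intro h
    obtain ⟨i, rfl, hi⟩ := h.descend hodd heven
    exact ih i (by omega) hi

end PosTriple

theorem stmt15 (n : ℕ) (hn : 1 ≤ n) :
    ¬(0 < PowerSeries.coeff (R := ℤ) (n - 1) (T ^ 2) ∧ 0 < PowerSeries.coeff (R := ℤ) n (T ^ 2) ∧
        0 < PowerSeries.coeff (R := ℤ) (n + 1) (T ^ 2)) ∧
    ¬(PowerSeries.coeff (R := ℤ) (n - 1) (T ^ 2) < 0 ∧ PowerSeries.coeff (R := ℤ) n (T ^ 2) < 0 ∧
        PowerSeries.coeff (R := ℤ) (n + 1) (T ^ 2) < 0) := by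
  obtain ⟨m, rfl⟩ := Nat.exists_eq_add_of_le' hn
  have hpos := not_posTriple (f := fun n => coeff n (T ^ 2))
    coeff_T_sq_two_mul_add_one coeff_T_sq_two_mul_add_two m
  have hneg := not_posTriple (f := fun n => -coeff n (T ^ 2))
    (fun n => by simp only [coeff_T_sq_two_mul_add_one]; ring)
    (fun n => by simp only [coeff_T_sq_two_mul_add_two]; ring) m
  simp only [PosTriple, Left.neg_pos_iff] at hpos hneg
  exact ⟨hpos, hneg⟩
end

section
/- For every m ∈ ℕ with m ≥ 1 and every n ∈ ℕ one has n·b_m(n) = m·Σ_{i=0}^{n} (n-i)·b_1(n-i)·b_{m-1}(i), where b_0(0) = 1 and b_0(i) = 0 for i ≥ 1. In particular, if gcd(m,n) = 1 then m divides b_m(n). -/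
/-- `b m n` is the coefficient of `xⁿ` in `T(x)^{-m}` (so `b 0 0 = 1` and
`b 0 i = 0` for `i ≥ 1`). -/
noncomputable def b (m n : ℕ) : ℤ :=
  PowerSeries.coeff n (((TU⁻¹ : (PowerSeries ℤ)ˣ) : PowerSeries ℤ) ^ m)

/-!
For any power series `F`, differentiating `F ^ m` gives `x (F ^ m)' = m F ^ (m - 1) · x F'`,
and `x G'` has coefficients `n · [xⁿ] G`. Applied to `F = T⁻¹`, comparing coefficients of `xⁿ`
is the identity; it exhibits `n b_m(n)` as a multiple of `m`, so `m ∣ b_m(n)` when `m` and `n`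
are coprime.
-/

namespace PowerSeries

variable {R : Type*} [CommRing R]

theorem coeff_X_mul_derivative (f : R⟦X⟧) (n : ℕ) :
    coeff n (X * derivative R f) = n * coeff n f := by
  cases n with
  | zero => simp
  | succ k => rw [coeff_succ_X_mul, coeff_derivative, mul_comm]; push_cast; rfl

theorem natCast_mul_coeff_pow (F : R⟦X⟧) (m n : ℕ) :
    (n : R) * coeff n (F ^ m) =
      m * ∑ i ∈ Finset.range (n + 1),
        ((n - i : ℕ) : R) * coeff (n - i) F * coeff i (F ^ (m - 1)) := by
  have hpow : X * derivative R (F ^ m) = (m : R⟦X⟧) * (F ^ (m - 1) * (X * derivative R F)) := by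
    rw [Derivation.leibniz_pow, nsmul_eq_mul, smul_eq_mul]
    ring
  rw [← coeff_X_mul_derivative, hpow, ← map_natCast (C (R := R)), coeff_C_mul, coeff_mul,
    Finset.Nat.sum_antidiagonal_eq_sum_range_succ_mk]
  simp only [coeff_X_mul_derivative]
  congr 1
  exact Finset.sum_congr rfl fun i _ => by ring

end PowerSeries

theorem stmt17_general (m : ℕ) (n : ℕ) :
    ((n : ℤ) * b m n =
      (m : ℤ) * ∑ i ∈ Finset.range (n + 1),
        ((n - i : ℕ) : ℤ) * b 1 (n - i) * b (m - 1) i) ∧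
    (Nat.gcd m n = 1 → (m : ℤ) ∣ b m n) := by
  have hrec : (n : ℤ) * b m n = _ := PowerSeries.natCast_mul_coeff_pow _ m n
  refine ⟨by simpa only [b, pow_one] using hrec, fun hmn => ?_⟩
  have hcop : IsCoprime (m : ℤ) n := Int.isCoprime_iff_gcd_eq_one.mpr (by simpa using hmn)
  exact hcop.dvd_of_dvd_mul_left ⟨_, hrec⟩

theorem stmt17 (m : ℕ) (hm : 1 ≤ m) (n : ℕ) :
    ((n : ℤ) * b m n =
      (m : ℤ) * ∑ i ∈ Finset.range (n + 1),
        ((n - i : ℕ) : ℤ) * b 1 (n - i) * b (m - 1) i) ∧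
    (Nat.gcd m n = 1 → (m : ℤ) ∣ b m n) :=
  stmt17_general m n
end
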